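/- arXiv:2105.03385 — 2 statements merged into one kernel-verified Lean document; each statement's English description precedes it below -/
import Mathlib

section
/- Let I = [a,b], 0 < δ ≤ 1 ≤ M, α₁,…,αₙ ≥ 0 with ∑ α_k = 1, and let f₁, f₂ ∈ F_I(δ,M). Then ‖L_{f₁} − L_{f₂}‖_I ≤ K₂ ‖f₁ − f₂‖_I and ‖L_{f₁}⁻¹ − L_{f₂}⁻¹‖_I ≤ (K₂/K₀) ‖f₁ − f₂‖_I, where K₀ := ∑_{k=1}^n α_k δ^{k−1} and K₂ := ∑_{k=2}^n α_k (∑_{j=0}^{k−2} M^j). -/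
/-!
Since `f₁` is `M`-Lipschitz, `|f₁^[m+1] x - f₂^[m+1] x| ≤ M |f₁^[m] x - f₂^[m] x| + ‖f₁ - f₂‖`,
so `|f₁^[m] x - f₂^[m] x| ≤ (1 + M + ⋯ + M^(m-1)) ‖f₁ - f₂‖`; averaging with the weights `α k`
bounds `L_{f₁} - L_{f₂}`. The lower bound `δ (x - y) ≤ f₁ x - f₁ y` iterates to
`K₀ (x - y) ≤ L_{f₁} x - L_{f₁} y`, so with `u = L_{f₁}⁻¹ x`, `v = L_{f₂}⁻¹ x` we get
`K₀ |u - v| ≤ |L_{f₁} u - L_{f₁} v| = |L_{f₂} v - L_{f₁} v| ≤ K₂ ‖f₁ - f₂‖`.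
-/

open Finset

/-- The paper's `L_f = ∑_{k=1}^n α_k f^{k-1}`. -/
def iterateCombination (α : ℕ → ℝ) (n : ℕ) (f : ℝ → ℝ) (x : ℝ) : ℝ :=
  ∑ k ∈ Finset.Icc 1 n, α k * f^[k - 1] x

section Iterates

variable {s : Set ℝ} {f g : ℝ → ℝ}

theorem iterate_sub_iterate_ge {δ : ℝ} (hδ : 0 ≤ δ) (hf : Set.MapsTo f s s)
    (hlow : ∀ x ∈ s, ∀ y ∈ s, y ≤ x → δ * (x - y) ≤ f x - f y) (m : ℕ) :
    ∀ x ∈ s, ∀ y ∈ s, y ≤ x → δ ^ m * (x - y) ≤ f^[m] x - f^[m] y := by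
  induction m with
  | zero => intro x _ y _ _; simp
  | succ m ih =>
    intro x hx y hy hyx
    have hm := ih x hx y hy hyx
    have hle : f^[m] y ≤ f^[m] x := by nlinarith [pow_nonneg hδ m]
    rw [Function.iterate_succ_apply', Function.iterate_succ_apply']
    calc δ ^ (m + 1) * (x - y) = δ * (δ ^ m * (x - y)) := by ring
      _ ≤ δ * (f^[m] x - f^[m] y) := mul_le_mul_of_nonneg_left hm hδ
      _ ≤ f (f^[m] x) - f (f^[m] y) := hlow _ (hf.iterate m hx) _ (hf.iterate m hy) hle

theorem abs_sub_le_of_sub_le {M : ℝ}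
    (hup : ∀ x ∈ s, ∀ y ∈ s, y ≤ x → f x - f y ≤ M * (x - y))
    (hmono : ∀ x ∈ s, ∀ y ∈ s, y ≤ x → f y ≤ f x) :
    ∀ x ∈ s, ∀ y ∈ s, |f x - f y| ≤ M * |x - y| := by
  intro x hx y hy
  rcases le_total y x with h | h
  · rw [abs_of_nonneg (sub_nonneg.2 (hmono x hx y hy h)), abs_of_nonneg (sub_nonneg.2 h)]
    exact hup x hx y hy h
  · rw [abs_sub_comm, abs_sub_comm x, abs_of_nonneg (sub_nonneg.2 (hmono y hy x hx h)),
      abs_of_nonneg (sub_nonneg.2 h)]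
    exact hup y hy x hx h

theorem abs_iterate_sub_iterate_le {M D : ℝ} (hM : 0 ≤ M) (hf : Set.MapsTo f s s)
    (hg : Set.MapsTo g s s) (hlip : ∀ x ∈ s, ∀ y ∈ s, |f x - f y| ≤ M * |x - y|)
    (hD : ∀ x ∈ s, |f x - g x| ≤ D) (m : ℕ) :
    ∀ x ∈ s, |f^[m] x - g^[m] x| ≤ (∑ j ∈ range m, M ^ j) * D := by
  induction m with
  | zero => intro x _; simp
  | succ m ih =>
    intro x hx
    have hfm := hf.iterate m hx
    have hgm := hg.iterate m hx
    rw [Function.iterate_succ_apply', Function.iterate_succ_apply', geom_sum_succ]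
    calc |f (f^[m] x) - g (g^[m] x)|
        ≤ |f (f^[m] x) - f (g^[m] x)| + |f (g^[m] x) - g (g^[m] x)| := abs_sub_le _ _ _
      _ ≤ M * ((∑ j ∈ range m, M ^ j) * D) + D := by
        gcongr
        · exact (hlip _ hfm _ hgm).trans (mul_le_mul_of_nonneg_left (ih x hx) hM)
        · exact hD _ hgm
      _ = (M * ∑ j ∈ range m, M ^ j + 1) * D := by ring

end Iterates

section Combination

variable {s : Set ℝ} {α : ℕ → ℝ} {n : ℕ} {f g : ℝ → ℝ}

theorem sum_Icc_two_eq_sum_Icc_one_geom (M : ℝ) :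
    ∑ k ∈ Icc 2 n, α k * ∑ j ∈ range (k - 1), M ^ j
      = ∑ k ∈ Icc 1 n, α k * ∑ j ∈ range (k - 1), M ^ j := by
  refine Finset.sum_subset (Icc_subset_Icc_left one_le_two) fun k hk hk2 => ?_
  obtain rfl : k = 1 := by simp only [Finset.mem_Icc] at hk hk2; omega
  simp

theorem abs_iterateCombination_sub_le {M D : ℝ} (hα : ∀ k ∈ Icc 1 n, 0 ≤ α k) (hM : 0 ≤ M)
    (hf : Set.MapsTo f s s) (hg : Set.MapsTo g s s)
    (hlip : ∀ x ∈ s, ∀ y ∈ s, |f x - f y| ≤ M * |x - y|) (hD : ∀ x ∈ s, |f x - g x| ≤ D) :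
    ∀ x ∈ s, |iterateCombination α n f x - iterateCombination α n g x|
      ≤ (∑ k ∈ Icc 2 n, α k * ∑ j ∈ range (k - 1), M ^ j) * D := by
  intro x hx
  rw [sum_Icc_two_eq_sum_Icc_one_geom, Finset.sum_mul, iterateCombination,
    iterateCombination, ← Finset.sum_sub_distrib]
  refine (Finset.abs_sum_le_sum_abs _ _).trans (Finset.sum_le_sum fun k hk => ?_)
  rw [← mul_sub, abs_mul, abs_of_nonneg (hα k hk), mul_assoc]
  exact mul_le_mul_of_nonneg_left
    (abs_iterate_sub_iterate_le hM hf hg hlip hD (k - 1) x hx) (hα k hk)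

theorem iterateCombination_sub_ge {δ : ℝ} (hα : ∀ k ∈ Icc 1 n, 0 ≤ α k) (hδ : 0 ≤ δ)
    (hf : Set.MapsTo f s s) (hlow : ∀ x ∈ s, ∀ y ∈ s, y ≤ x → δ * (x - y) ≤ f x - f y) :
    ∀ x ∈ s, ∀ y ∈ s, y ≤ x → (∑ k ∈ Icc 1 n, α k * δ ^ (k - 1)) * (x - y)
      ≤ iterateCombination α n f x - iterateCombination α n f y := by
  intro x hx y hy hyx
  rw [iterateCombination, iterateCombination, ← Finset.sum_sub_distrib, Finset.sum_mul]
  refine Finset.sum_le_sum fun k hk => ?_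
  rw [← mul_sub, mul_assoc]
  exact mul_le_mul_of_nonneg_left
    (iterate_sub_iterate_ge hδ hf hlow (k - 1) x hx y hy hyx) (hα k hk)

end Combination

theorem sum_mul_pos_of_sum_eq_one {ι : Type*} {t : Finset ι} {w g : ι → ℝ}
    (hw : ∀ i ∈ t, 0 ≤ w i) (hwsum : ∑ i ∈ t, w i = 1) (hg : ∀ i ∈ t, 0 < g i) :
    0 < ∑ i ∈ t, w i * g i := by
  obtain ⟨i, hi, hwi⟩ : ∃ i ∈ t, 0 < w i := by
    by_contra! h
    linarith [Finset.sum_nonpos h]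
  exact Finset.sum_pos' (fun j hj => mul_nonneg (hw j hj) (hg j hj).le)
    ⟨i, hi, mul_pos hwi (hg i hi)⟩

theorem mul_abs_sub_le_of_apply_eq {s : Set ℝ} {L₁ L₂ : ℝ → ℝ} {K E u v : ℝ}
    (hL₁ : ∀ x ∈ s, ∀ y ∈ s, y ≤ x → K * (x - y) ≤ L₁ x - L₁ y)
    (hE : ∀ y ∈ s, |L₁ y - L₂ y| ≤ E) (hu : u ∈ s) (hv : v ∈ s) (huv : L₁ u = L₂ v) :
    K * |u - v| ≤ E := by
  have hEv := abs_le.1 (hE v hv)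
  rcases le_total v u with h | h
  · rw [abs_of_nonneg (sub_nonneg.2 h)]
    linarith [hL₁ u hu v hv h]
  · rw [abs_of_nonpos (sub_nonpos.2 h)]
    linarith [hL₁ v hv u hu h]

theorem abs_sub_le_sSup_image_of_mapsTo {s : Set ℝ} {a b : ℝ} {f g : ℝ → ℝ}
    (hf : Set.MapsTo f s (Set.Icc a b)) (hg : Set.MapsTo g s (Set.Icc a b)) :
    ∀ x ∈ s, |f x - g x| ≤ sSup ((fun x => |f x - g x|) '' s) := by
  refine fun x hx => le_csSup ⟨b - a, ?_⟩ ⟨x, hx, rfl⟩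
  rintro _ ⟨y, hy, rfl⟩
  obtain ⟨hfa, hfb⟩ := hf hy
  obtain ⟨hga, hgb⟩ := hg hy
  exact abs_le.2 ⟨by linarith, by linarith⟩

theorem stmt12_general (a b δ M : ℝ) (hδ0 : 0 < δ)
    (hM : 1 ≤ M) (n : ℕ) (α : ℕ → ℝ)
    (hα : ∀ k ∈ Finset.Icc 1 n, 0 ≤ α k)
    (hαsum : ∑ k ∈ Finset.Icc 1 n, α k = 1)
    (f₁ f₂ : ℝ → ℝ)
    (hmaps₁ : Set.MapsTo f₁ (Set.Icc a b) (Set.Icc a b))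
    (hlip₁ : ∀ x ∈ Set.Icc a b, ∀ y ∈ Set.Icc a b, y ≤ x →
      δ * (x - y) ≤ f₁ x - f₁ y ∧ f₁ x - f₁ y ≤ M * (x - y))
    (hmaps₂ : Set.MapsTo f₂ (Set.Icc a b) (Set.Icc a b))
    (Linv₁ Linv₂ : ℝ → ℝ)
    (hLinv₁m : Set.MapsTo Linv₁ (Set.Icc a b) (Set.Icc a b))
    (hLinv₂m : Set.MapsTo Linv₂ (Set.Icc a b) (Set.Icc a b))
    (hLinv₁r : ∀ x ∈ Set.Icc a b,
      (∑ k ∈ Finset.Icc 1 n, α k * f₁^[k - 1] (Linv₁ x)) = x)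
    (hLinv₂r : ∀ x ∈ Set.Icc a b,
      (∑ k ∈ Finset.Icc 1 n, α k * f₂^[k - 1] (Linv₂ x)) = x) :
    sSup ((fun x => |(∑ k ∈ Finset.Icc 1 n, α k * f₁^[k - 1] x)
        - (∑ k ∈ Finset.Icc 1 n, α k * f₂^[k - 1] x)|) '' Set.Icc a b)
      ≤ (∑ k ∈ Finset.Icc 2 n, α k * (∑ j ∈ Finset.range (k - 1), M ^ j)) *
        sSup ((fun x => |f₁ x - f₂ x|) '' Set.Icc a b) ∧
    sSup ((fun x => |Linv₁ x - Linv₂ x|) '' Set.Icc a b)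
      ≤ ((∑ k ∈ Finset.Icc 2 n, α k * (∑ j ∈ Finset.range (k - 1), M ^ j))
          / (∑ k ∈ Finset.Icc 1 n, α k * δ ^ (k - 1))) *
        sSup ((fun x => |f₁ x - f₂ x|) '' Set.Icc a b) := by
  set D := sSup ((fun x => |f₁ x - f₂ x|) '' Set.Icc a b)
  set K₂ := ∑ k ∈ Icc 2 n, α k * ∑ j ∈ range (k - 1), M ^ j
  set K₀ := ∑ k ∈ Icc 1 n, α k * δ ^ (k - 1)
  have hM0 : 0 ≤ M := zero_le_one.trans hM
  have hD0 : 0 ≤ D := Real.sSup_nonneg (Set.forall_mem_image.2 fun _ _ => abs_nonneg _)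
  have hK₂ : 0 ≤ K₂ := Finset.sum_nonneg fun k hk =>
    mul_nonneg (hα k (Icc_subset_Icc_left one_le_two hk))
      (Finset.sum_nonneg fun j _ => pow_nonneg hM0 j)
  have hK₀ : 0 < K₀ := sum_mul_pos_of_sum_eq_one hα hαsum fun k _ => pow_pos hδ0 (k - 1)
  have hlow₁ x hx y hy hyx := (hlip₁ x hx y hy hyx).1
  have hlipAbs₁ := abs_sub_le_of_sub_le (fun x hx y hy hyx => (hlip₁ x hx y hy hyx).2)
    fun x hx y hy hyx => sub_nonneg.1 <| (mul_nonneg hδ0.le (sub_nonneg.2 hyx)).trans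
      (hlow₁ x hx y hy hyx)
  have hL : ∀ x ∈ Set.Icc a b, |iterateCombination α n f₁ x - iterateCombination α n f₂ x|
      ≤ K₂ * D := abs_iterateCombination_sub_le hα hM0 hmaps₁ hmaps₂ hlipAbs₁
    (abs_sub_le_sSup_image_of_mapsTo hmaps₁ hmaps₂)
  refine ⟨Real.sSup_le (Set.forall_mem_image.2 hL) (mul_nonneg hK₂ hD0),
    Real.sSup_le (Set.forall_mem_image.2 fun x hx => ?_) (by positivity)⟩
  rw [div_mul_eq_mul_div, le_div_iff₀ hK₀, mul_comm]
  exact mul_abs_sub_le_of_apply_eq (iterateCombination_sub_ge hα hδ0.le hmaps₁ hlow₁) hL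
    (hLinv₁m hx) (hLinv₂m hx) ((hLinv₁r x hx).trans (hLinv₂r x hx).symm)

/-- Lipschitz dependence of `L_f` and `L_f⁻¹` on `f`:
`‖L_{f₁} − L_{f₂}‖_I ≤ K₂‖f₁ − f₂‖_I` and
`‖L_{f₁}⁻¹ − L_{f₂}⁻¹‖_I ≤ (K₂/K₀)‖f₁ − f₂‖_I`. -/
theorem stmt12 (a b δ M : ℝ) (hab : a < b) (hδ0 : 0 < δ) (hδ1 : δ ≤ 1)
    (hM : 1 ≤ M) (n : ℕ) (hn : 1 ≤ n) (α : ℕ → ℝ)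
    (hα : ∀ k ∈ Finset.Icc 1 n, 0 ≤ α k)
    (hαsum : ∑ k ∈ Finset.Icc 1 n, α k = 1)
    (f₁ f₂ : ℝ → ℝ)
    (hmaps₁ : Set.MapsTo f₁ (Set.Icc a b) (Set.Icc a b))
    (hcont₁ : ContinuousOn f₁ (Set.Icc a b))
    (hfa₁ : f₁ a = a) (hfb₁ : f₁ b = b)
    (hlip₁ : ∀ x ∈ Set.Icc a b, ∀ y ∈ Set.Icc a b, y ≤ x →
      δ * (x - y) ≤ f₁ x - f₁ y ∧ f₁ x - f₁ y ≤ M * (x - y))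
    (hmaps₂ : Set.MapsTo f₂ (Set.Icc a b) (Set.Icc a b))
    (hcont₂ : ContinuousOn f₂ (Set.Icc a b))
    (hfa₂ : f₂ a = a) (hfb₂ : f₂ b = b)
    (hlip₂ : ∀ x ∈ Set.Icc a b, ∀ y ∈ Set.Icc a b, y ≤ x →
      δ * (x - y) ≤ f₂ x - f₂ y ∧ f₂ x - f₂ y ≤ M * (x - y))
    (Linv₁ Linv₂ : ℝ → ℝ)
    (hLinv₁m : Set.MapsTo Linv₁ (Set.Icc a b) (Set.Icc a b))
    (hLinv₂m : Set.MapsTo Linv₂ (Set.Icc a b) (Set.Icc a b))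
    (hLinv₁l : ∀ x ∈ Set.Icc a b,
      Linv₁ (∑ k ∈ Finset.Icc 1 n, α k * f₁^[k - 1] x) = x)
    (hLinv₁r : ∀ x ∈ Set.Icc a b,
      (∑ k ∈ Finset.Icc 1 n, α k * f₁^[k - 1] (Linv₁ x)) = x)
    (hLinv₂l : ∀ x ∈ Set.Icc a b,
      Linv₂ (∑ k ∈ Finset.Icc 1 n, α k * f₂^[k - 1] x) = x)
    (hLinv₂r : ∀ x ∈ Set.Icc a b,
      (∑ k ∈ Finset.Icc 1 n, α k * f₂^[k - 1] (Linv₂ x)) = x) :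
    sSup ((fun x => |(∑ k ∈ Finset.Icc 1 n, α k * f₁^[k - 1] x)
        - (∑ k ∈ Finset.Icc 1 n, α k * f₂^[k - 1] x)|) '' Set.Icc a b)
      ≤ (∑ k ∈ Finset.Icc 2 n, α k * (∑ j ∈ Finset.range (k - 1), M ^ j)) *
        sSup ((fun x => |f₁ x - f₂ x|) '' Set.Icc a b) ∧
    sSup ((fun x => |Linv₁ x - Linv₂ x|) '' Set.Icc a b)
      ≤ ((∑ k ∈ Finset.Icc 2 n, α k * (∑ j ∈ Finset.range (k - 1), M ^ j))
          / (∑ k ∈ Finset.Icc 1 n, α k * δ ^ (k - 1))) *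
        sSup ((fun x => |f₁ x - f₂ x|) '' Set.Icc a b) :=
  stmt12_general a b δ M hδ0 hM n α hα hαsum f₁ f₂ hmaps₁ hlip₁ hmaps₂ Linv₁ Linv₂ hLinv₁m hLinv₂m
    hLinv₁r hLinv₂r
end

section
/- Let 0 < α₁ < 1, α₂,…,αₙ ≥ 0 with ∑_{k=1}^n α_k = 1, let 0 < δ ≤ 1 ≤ M, and set K₀ = ∑ α_k δ^{k−1}, K₁ = ∑ α_k M^{k−1}, K₂ = ∑_{k=2}^n α_k (∑_{j=0}^{k−2} M^j). Let I = [a,b] with a < b, and let F : ℝ → ℝ be continuous bounded with range(F) = I, F(a) = a, F(b) = b, and K₁δ(x−y) ≤ F(x) − F(y) ≤ K₀M(x−y) for all x ≥ y in I. If K₂ < K₀, then the equation α₁ f(x) + α₂ f²(x) + ⋯ + αₙ fⁿ(x) = F(x) for all x ∈ ℝ has exactly one solution f in F_I(δ,M). -/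
/-!
Write `Φ_f = ∑ αₖ f^(k-1)` (`iterPoly`), so that the equation reads `Φ_f ∘ f = F`. For `f` in
`F_I(δ, M)` the map `Φ_f` fixes `a` and `b` and has slopes between `K₀` and `K₁` on `I`, hence is
invertible on `I`, and the equation becomes the fixed point problem `f = Φ_f⁻¹ ∘ F`. The slope
bounds `K₁δ` and `K₀M` of `F` are exactly what makes `Φ_f⁻¹ ∘ F` land in `F_I(δ, M)` again, and
from `|f^j - g^j| ≤ (1 + M + ⋯ + M^(j-1)) ‖f - g‖` on `I` one gets
`K₀ ‖Φ_f⁻¹ ∘ F - Φ_g⁻¹ ∘ F‖ ≤ K₂ ‖f - g‖`. Since `F_I(δ, M)` is closed among bounded continuous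
functions and `K₂ < K₀`, Banach's fixed point theorem applies.
-/

open Set Function
open scoped BoundedContinuousFunction

def SlopeBoundsOn (δ M : ℝ) (f : ℝ → ℝ) (s : Set ℝ) : Prop :=
  ∀ x ∈ s, ∀ y ∈ s, y ≤ x → δ * (x - y) ≤ f x - f y ∧ f x - f y ≤ M * (x - y)

namespace SlopeBoundsOn

variable {δ M δ' M' : ℝ} {f g : ℝ → ℝ} {s t : Set ℝ}

theorem comp (hg : SlopeBoundsOn δ' M' g t) (hf : SlopeBoundsOn δ M f s) (hst : MapsTo f s t)
    (hδ : 0 ≤ δ) (hδ' : 0 ≤ δ') (hM' : 0 ≤ M') :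
    SlopeBoundsOn (δ' * δ) (M' * M) (g ∘ f) s := by
  intro x hx y hy hyx
  obtain ⟨hlo, hhi⟩ := hf x hx y hy hyx
  have hfyx : f y ≤ f x := sub_nonneg.1 ((mul_nonneg hδ (sub_nonneg.2 hyx)).trans hlo)
  obtain ⟨hglo, hghi⟩ := hg (f x) (hst hx) (f y) (hst hy) hfyx
  constructor
  · calc δ' * δ * (x - y) = δ' * (δ * (x - y)) := by ring
      _ ≤ δ' * (f x - f y) := mul_le_mul_of_nonneg_left hlo hδ'
      _ ≤ _ := hglo
  · calc (g ∘ f) x - (g ∘ f) y ≤ M' * (f x - f y) := hghi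
      _ ≤ M' * (M * (x - y)) := mul_le_mul_of_nonneg_left hhi hM'
      _ = M' * M * (x - y) := by ring

theorem iterate (hf : SlopeBoundsOn δ M f s) (hmaps : MapsTo f s s) (hδ : 0 ≤ δ) (hM : 0 ≤ M) :
    ∀ m : ℕ, SlopeBoundsOn (δ ^ m) (M ^ m) f^[m] s
  | 0 => fun x _ y _ _ => by simp
  | m + 1 => by
    rw [iterate_succ, pow_succ, pow_succ]
    exact (hf.iterate hmaps hδ hM m).comp hf hmaps hδ (pow_nonneg hδ m) (pow_nonneg hM m)

theorem sum {ι : Type*} (I : Finset ι) {c lo hi : ι → ℝ} {f : ι → ℝ → ℝ} (hc : ∀ i ∈ I, 0 ≤ c i)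
    (hf : ∀ i ∈ I, SlopeBoundsOn (lo i) (hi i) (f i) s) :
    SlopeBoundsOn (∑ i ∈ I, c i * lo i) (∑ i ∈ I, c i * hi i)
      (fun x => ∑ i ∈ I, c i * f i x) s := by
  intro x hx y hy hyx
  simp only [Finset.sum_mul, ← Finset.sum_sub_distrib]
  constructor <;> refine Finset.sum_le_sum fun i hi => ?_
  · rw [mul_assoc, ← mul_sub]
    exact mul_le_mul_of_nonneg_left (hf i hi x hx y hy hyx).1 (hc i hi)
  · rw [mul_assoc, ← mul_sub]
    exact mul_le_mul_of_nonneg_left (hf i hi x hx y hy hyx).2 (hc i hi)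

theorem mul_abs_sub_le_abs_sub (hf : SlopeBoundsOn δ M f s) (hδ : 0 ≤ δ)
    {x y : ℝ} (hx : x ∈ s) (hy : y ∈ s) :
    δ * |x - y| ≤ |f x - f y| ∧ |f x - f y| ≤ M * |x - y| := by
  rcases le_total y x with hyx | hxy
  · obtain ⟨hlo, hhi⟩ := hf x hx y hy hyx
    have : 0 ≤ δ * (x - y) := mul_nonneg hδ (sub_nonneg.2 hyx)
    rw [abs_of_nonneg (sub_nonneg.2 hyx), abs_of_nonneg (this.trans hlo)]
    exact ⟨hlo, hhi⟩
  · obtain ⟨hlo, hhi⟩ := hf y hy x hx hxy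
    have : 0 ≤ δ * (y - x) := mul_nonneg hδ (sub_nonneg.2 hxy)
    rw [abs_sub_comm x, abs_sub_comm (f x), abs_of_nonneg (sub_nonneg.2 hxy),
      abs_of_nonneg (this.trans hlo)]
    exact ⟨hlo, hhi⟩

theorem mono (hf : SlopeBoundsOn δ M f s) (hδ : δ' ≤ δ) (hM : M ≤ M') :
    SlopeBoundsOn δ' M' f s := fun x hx y hy hyx =>
  ⟨(mul_le_mul_of_nonneg_right hδ (sub_nonneg.2 hyx)).trans (hf x hx y hy hyx).1,
    (hf x hx y hy hyx).2.trans (mul_le_mul_of_nonneg_right hM (sub_nonneg.2 hyx))⟩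

theorem lipschitzOnWith (hf : SlopeBoundsOn δ M f s) (hδ : 0 ≤ δ) :
    LipschitzOnWith M.toNNReal f s :=
  LipschitzOnWith.of_dist_le' fun _ hx _ hy => (hf.mul_abs_sub_le_abs_sub hδ hx hy).2

theorem injOn (hf : SlopeBoundsOn δ M f s) (hδ : 0 < δ) : InjOn f s := by
  intro x hx y hy hxy
  have := (hf.mul_abs_sub_le_abs_sub hδ.le hx hy).1
  rw [hxy, sub_self, abs_zero] at this
  exact sub_eq_zero.1 (abs_nonpos_iff.1 (nonpos_of_mul_nonpos_right this hδ))

theorem of_rightInvOn {φ ψ : ℝ → ℝ} (hφ : SlopeBoundsOn δ M φ s) (hδ : 0 < δ)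
    (hmaps : MapsTo ψ t s) (hinv : RightInvOn ψ φ t) :
    SlopeBoundsOn M⁻¹ δ⁻¹ ψ t := by
  intro y hy y' hy' hyy'
  have hu := hmaps hy
  have hv := hmaps hy'
  have hψ : ψ y' ≤ ψ y := by
    by_contra! h
    have := (hφ _ hv _ hu h.le).1
    rw [hinv hy, hinv hy'] at this
    linarith [mul_pos hδ (sub_pos.2 h)]
  obtain ⟨hlo, hhi⟩ := hφ _ hu _ hv hψ
  rw [hinv hy, hinv hy'] at hlo hhi
  constructor
  · rcases le_or_gt M 0 with hM | hM
    · exact (mul_nonpos_of_nonpos_of_nonneg (inv_nonpos.2 hM) (sub_nonneg.2 hyy')).trans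
        (sub_nonneg.2 hψ)
    · rw [inv_mul_le_iff₀ hM]; exact hhi
  · rw [le_inv_mul_iff₀ hδ]; exact hlo

end SlopeBoundsOn

theorem dist_iterate_iterate_le {X : Type*} [PseudoMetricSpace X] {s : Set X} {f g : X → X}
    {K : NNReal} {ε : ℝ} (hf : LipschitzOnWith K f s) (hfs : MapsTo f s s) (hgs : MapsTo g s s)
    (hfg : ∀ x ∈ s, dist (f x) (g x) ≤ ε) :
    ∀ m : ℕ, ∀ x ∈ s, dist (f^[m] x) (g^[m] x) ≤ (∑ j ∈ Finset.range m, (K : ℝ) ^ j) * ε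
  | 0 => fun x _ => by simp
  | m + 1 => fun x hx => by
    rw [iterate_succ_apply', iterate_succ_apply', Finset.sum_range_succ', pow_zero, add_mul,
      one_mul]
    calc dist (f (f^[m] x)) (g (g^[m] x))
        ≤ dist (f (f^[m] x)) (f (g^[m] x)) + dist (f (g^[m] x)) (g (g^[m] x)) := dist_triangle ..
      _ ≤ K * ((∑ j ∈ Finset.range m, (K : ℝ) ^ j) * ε) + ε := by
        gcongr
        · exact (hf.dist_le_mul _ (hfs.iterate m hx) _ (hgs.iterate m hx)).trans
            (mul_le_mul_of_nonneg_left (dist_iterate_iterate_le hf hfs hgs hfg m x hx) K.2)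
        · exact hfg _ (hgs.iterate m hx)
      _ = (∑ j ∈ Finset.range m, (K : ℝ) ^ (j + 1)) * ε + ε := by
        simp only [pow_succ, ← Finset.sum_mul]; ring

namespace BoundedContinuousFunction

theorem existsUnique_fixedPoint {X Y : Type*} [TopologicalSpace X] [MetricSpace Y]
    [CompleteSpace Y] {P : (X → Y) → Prop} {T : (X → Y) → X → Y} {K : ℝ} (hK : K < 1)
    (hP : ∀ f, P f → ∃ g : X →ᵇ Y, ⇑g = f) (hclosed : IsClosed {g : X →ᵇ Y | P g})
    (hT : ∀ f, P f → P (T f))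
    (hcontr : ∀ g h : X →ᵇ Y, P g → P h → ∀ x, dist (T g x) (T h x) ≤ K * dist g h)
    (hne : ∃ f, P f) :
    ∃! f, P f ∧ T f = f := by
  let S := {g : X →ᵇ Y | P g}
  have : CompleteSpace S := hclosed.completeSpace_coe
  obtain ⟨f, hf⟩ := hne
  obtain ⟨g, rfl⟩ := hP f hf
  have : Nonempty S := ⟨⟨g, hf⟩⟩
  let T' : S → S := fun g => ⟨(hP _ (hT _ g.2)).choose, by
    rw [Set.mem_ofPred_eq, (hP _ (hT _ g.2)).choose_spec]; exact hT _ g.2⟩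
  have hT' : ∀ g : S, ⇑(T' g : X →ᵇ Y) = T g := fun g => (hP _ (hT _ g.2)).choose_spec
  have hcontr' : ContractingWith K.toNNReal T' := by
    refine ⟨Real.toNNReal_lt_one.2 hK, LipschitzWith.of_dist_le_mul fun g h => ?_⟩
    rw [Subtype.dist_eq, Subtype.dist_eq, Real.coe_toNNReal']
    refine (dist_le (mul_nonneg (le_max_right K 0) dist_nonneg)).2 fun x => ?_
    rw [hT', hT']
    exact (hcontr g h g.2 h.2 x).trans (mul_le_mul_of_nonneg_right (le_max_left K 0) dist_nonneg)
  have hfix : ∀ f, P f → T f = f → ∃ g : S, ⇑(g : X →ᵇ Y) = f ∧ IsFixedPt T' g := by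
    intro f hf hTf
    obtain ⟨g, rfl⟩ := hP f hf
    exact ⟨⟨g, hf⟩, rfl, Subtype.ext (DFunLike.coe_injective (by rw [hT']; exact hTf))⟩
  let f₀ := ContractingWith.fixedPoint T' hcontr'
  refine ⟨f₀.1, ⟨f₀.2, ?_⟩, fun f ⟨hf, hTf⟩ => ?_⟩
  · rw [← hT', ContractingWith.fixedPoint_isFixedPt hcontr']
  · obtain ⟨g, rfl, hg⟩ := hfix f hf hTf
    rw [hcontr'.fixedPoint_unique hg]

end BoundedContinuousFunction

theorem sum_Icc_one_eq_sum_Icc_two {A : Type*} [AddCommMonoid A] {c : ℕ → A} (hc : c 1 = 0)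
    (n : ℕ) : ∑ k ∈ Finset.Icc 1 n, c k = ∑ k ∈ Finset.Icc 2 n, c k := by
  refine (Finset.sum_subset (Finset.Icc_subset_Icc_left one_le_two) fun k hk hk2 => ?_).symm
  obtain rfl : k = 1 := by simp only [Finset.mem_Icc] at hk hk2; omega
  exact hc

theorem sum_mul_pow_le_one {α : ℕ → ℝ} {n : ℕ} {t : ℝ} (hα : ∀ k ∈ Finset.Icc 1 n, 0 ≤ α k)
    (hαsum : ∑ k ∈ Finset.Icc 1 n, α k = 1) (ht₀ : 0 ≤ t) (ht₁ : t ≤ 1) :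
    ∑ k ∈ Finset.Icc 1 n, α k * t ^ (k - 1) ≤ 1 :=
  hαsum ▸ Finset.sum_le_sum fun k hk => mul_le_of_le_one_right (hα k hk) (pow_le_one₀ ht₀ ht₁)

theorem one_le_sum_mul_pow {α : ℕ → ℝ} {n : ℕ} {t : ℝ} (hα : ∀ k ∈ Finset.Icc 1 n, 0 ≤ α k)
    (hαsum : ∑ k ∈ Finset.Icc 1 n, α k = 1) (ht : 1 ≤ t) :
    1 ≤ ∑ k ∈ Finset.Icc 1 n, α k * t ^ (k - 1) :=
  hαsum ▸ Finset.sum_le_sum fun k hk => le_mul_of_one_le_right (hα k hk) (one_le_pow₀ ht)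

def iterPoly (α : ℕ → ℝ) (n : ℕ) (f : ℝ → ℝ) (x : ℝ) : ℝ :=
  ∑ k ∈ Finset.Icc 1 n, α k * f^[k - 1] x

section IterPoly

variable {α : ℕ → ℝ} {n : ℕ} {f g : ℝ → ℝ}

theorem sum_mul_iterate_eq_iterPoly (x : ℝ) :
    ∑ k ∈ Finset.Icc 1 n, α k * f^[k] x = iterPoly α n f (f x) := by
  refine Finset.sum_congr rfl fun k hk => ?_
  obtain ⟨j, rfl⟩ := Nat.exists_eq_add_of_le' (Finset.mem_Icc.1 hk).1
  rfl

theorem iterPoly_of_isFixedPt (hαsum : ∑ k ∈ Finset.Icc 1 n, α k = 1) {a : ℝ} (ha : IsFixedPt f a) :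
    iterPoly α n f a = a := by
  simp only [iterPoly, (ha.iterate _).eq, ← Finset.sum_mul, hαsum, one_mul]

theorem Continuous.iterPoly (hf : Continuous f) : Continuous (iterPoly α n f) :=
  continuous_finsetSum _ fun _ _ => continuous_const.mul (hf.iterate _)

variable {δ M : ℝ} {s : Set ℝ}

theorem SlopeBoundsOn.iterPoly (hf : SlopeBoundsOn δ M f s) (hfs : MapsTo f s s)
    (hδ : 0 ≤ δ) (hM : 0 ≤ M) (hα : ∀ k ∈ Finset.Icc 1 n, 0 ≤ α k) :
    SlopeBoundsOn (∑ k ∈ Finset.Icc 1 n, α k * δ ^ (k - 1))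
      (∑ k ∈ Finset.Icc 1 n, α k * M ^ (k - 1)) (iterPoly α n f) s :=
  SlopeBoundsOn.sum _ hα fun k _ => hf.iterate hfs hδ hM (k - 1)

theorem abs_iterPoly_sub_iterPoly_le (hf : SlopeBoundsOn δ M f s) (hδ : 0 ≤ δ) (hM : 0 ≤ M)
    (hfs : MapsTo f s s) (hgs : MapsTo g s s) (hα : ∀ k ∈ Finset.Icc 1 n, 0 ≤ α k) {ε : ℝ}
    (hfg : ∀ x ∈ s, |f x - g x| ≤ ε) {x : ℝ} (hx : x ∈ s) :
    |iterPoly α n f x - iterPoly α n g x|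
      ≤ (∑ k ∈ Finset.Icc 2 n, α k * ∑ j ∈ Finset.range (k - 1), M ^ j) * ε := by
  have hiter := dist_iterate_iterate_le (hf.lipschitzOnWith hδ) hfs hgs hfg
  rw [← sum_Icc_one_eq_sum_Icc_two (by simp), iterPoly, iterPoly, ← Finset.sum_sub_distrib,
    Finset.sum_mul]
  refine (Finset.abs_sum_le_sum_abs _ _).trans (Finset.sum_le_sum fun k hk => ?_)
  rw [← mul_sub, abs_mul, abs_of_nonneg (hα k hk), mul_assoc]
  refine mul_le_mul_of_nonneg_left ?_ (hα k hk)
  simpa only [Real.coe_toNNReal _ hM, Real.dist_eq] using hiter (k - 1) x hx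

end IterPoly

/-- The class `F_I(δ, M)` with `I = [a, b]`. -/
structure IsAdmissible (a b δ M : ℝ) (f : ℝ → ℝ) : Prop where
  continuous : Continuous f
  range_eq : range f = Icc a b
  apply_left : f a = a
  apply_right : f b = b
  slopeBoundsOn : SlopeBoundsOn δ M f (Icc a b)

theorem Continuous.range_eq_Icc {a b : ℝ} {f : ℝ → ℝ} (hf : Continuous f) (hab : a ≤ b)
    (ha : f a = a) (hb : f b = b) (hfab : ∀ x, f x ∈ Icc a b) : range f = Icc a b := by
  refine (range_subset_iff.2 hfab).antisymm fun y hy => ?_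
  obtain ⟨x, -, rfl⟩ := intermediate_value_Icc hab hf.continuousOn (by rwa [ha, hb])
  exact mem_range_self x

namespace IsAdmissible

variable {a b δ M : ℝ} {f : ℝ → ℝ}

theorem _root_.isAdmissible_iff : IsAdmissible a b δ M f ↔
    Continuous f ∧ range f = Icc a b ∧ f a = a ∧ f b = b ∧ SlopeBoundsOn δ M f (Icc a b) :=
  ⟨fun ⟨hc, hr, ha, hb, hs⟩ => ⟨hc, hr, ha, hb, hs⟩,
    fun ⟨hc, hr, ha, hb, hs⟩ => ⟨hc, hr, ha, hb, hs⟩⟩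

theorem mem_Icc (hf : IsAdmissible a b δ M f) (x : ℝ) : f x ∈ Icc a b :=
  hf.range_eq ▸ mem_range_self x

theorem mapsTo (hf : IsAdmissible a b δ M f) : MapsTo f (Icc a b) (Icc a b) :=
  fun x _ => hf.mem_Icc x

theorem exists_boundedContinuousFunction (hf : IsAdmissible a b δ M f) :
    ∃ g : ℝ →ᵇ ℝ, ⇑g = f :=
  ⟨.mkOfBound ⟨f, hf.continuous⟩ (b - a) fun x y =>
    Real.dist_le_of_mem_Icc (hf.mem_Icc x) (hf.mem_Icc y), rfl⟩

theorem _root_.isClosed_setOf_isAdmissible (hab : a ≤ b) :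
    IsClosed {g : ℝ →ᵇ ℝ | IsAdmissible a b δ M g} := by
  have : {g : ℝ →ᵇ ℝ | IsAdmissible a b δ M g} =
      {g : ℝ →ᵇ ℝ | ∀ x, g x ∈ Icc a b} ∩ {g | g a = a} ∩ {g | g b = b} ∩
        {g | SlopeBoundsOn δ M g (Icc a b)} := by
    ext g
    simp only [mem_ofPred_eq, mem_inter_iff]
    exact ⟨fun hg => ⟨⟨⟨hg.mem_Icc, hg.apply_left⟩, hg.apply_right⟩, hg.slopeBoundsOn⟩,
      fun ⟨⟨⟨hg, ha⟩, hb⟩, hs⟩ =>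
        ⟨g.continuous, g.continuous.range_eq_Icc hab ha hb hg, ha, hb, hs⟩⟩
  rw [this]
  have hev := fun x => continuous_eval_const (F := ℝ →ᵇ ℝ) x
  simp only [SlopeBoundsOn, ofPred_forall]
  refine (((isClosed_iInter fun x => isClosed_Icc.preimage (hev x)).inter
    (isClosed_eq (hev a) continuous_const)).inter (isClosed_eq (hev b) continuous_const)).inter
      (isClosed_iInter fun x => isClosed_iInter fun _ => isClosed_iInter fun y =>
        isClosed_iInter fun _ => isClosed_iInter fun _ => ?_)
  exact (isClosed_le continuous_const ((hev x).sub (hev y))).inter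
    (isClosed_le ((hev x).sub (hev y)) continuous_const)

end IsAdmissible

noncomputable def solutionMap (a b : ℝ) (α : ℕ → ℝ) (n : ℕ) (F f : ℝ → ℝ) : ℝ → ℝ :=
  invFunOn (iterPoly α n f) (Icc a b) ∘ F

section SolutionMap

variable {a b δ M : ℝ} {α : ℕ → ℝ} {n : ℕ} {F f g : ℝ → ℝ}

theorem IsAdmissible.surjOn_iterPoly (hf : IsAdmissible a b δ M f) (hab : a ≤ b)
    (hαsum : ∑ k ∈ Finset.Icc 1 n, α k = 1) :
    SurjOn (iterPoly α n f) (Icc a b) (Icc a b) := by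
  have := intermediate_value_Icc hab (hf.continuous.iterPoly (α := α) (n := n)).continuousOn
  rwa [iterPoly_of_isFixedPt hαsum hf.apply_left,
    iterPoly_of_isFixedPt hαsum hf.apply_right] at this

theorem IsAdmissible.injOn_iterPoly (hf : IsAdmissible a b δ M f) (hδ : 0 ≤ δ) (hM : 0 ≤ M)
    (hα : ∀ k ∈ Finset.Icc 1 n, 0 ≤ α k) (hK₀ : 0 < ∑ k ∈ Finset.Icc 1 n, α k * δ ^ (k - 1)) :
    InjOn (iterPoly α n f) (Icc a b) :=
  (hf.slopeBoundsOn.iterPoly hf.mapsTo hδ hM hα).injOn hK₀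

theorem IsAdmissible.solutionMap_eq_self_iff (hf : IsAdmissible a b δ M f) (hab : a ≤ b)
    (hδ : 0 ≤ δ) (hM : 0 ≤ M) (hα : ∀ k ∈ Finset.Icc 1 n, 0 ≤ α k)
    (hαsum : ∑ k ∈ Finset.Icc 1 n, α k = 1) (hK₀ : 0 < ∑ k ∈ Finset.Icc 1 n, α k * δ ^ (k - 1))
    (hF : ∀ x, F x ∈ Icc a b) :
    solutionMap a b α n F f = f ↔ ∀ x, ∑ k ∈ Finset.Icc 1 n, α k * f^[k] x = F x := by
  simp only [funext_iff, solutionMap, comp_apply, sum_mul_iterate_eq_iterPoly]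
  refine forall_congr' fun x => ⟨fun h => ?_, fun h => ?_⟩
  · rw [← h, (hf.surjOn_iterPoly hab hαsum).rightInvOn_invFunOn (hF x)]
  · rw [← h, (hf.injOn_iterPoly hδ hM hα hK₀).leftInvOn_invFunOn (hf.mem_Icc x)]

theorem isAdmissible_solutionMap (hf : IsAdmissible a b δ M f) (hab : a ≤ b)
    (hδ : 0 ≤ δ) (hM : 0 ≤ M) (hα : ∀ k ∈ Finset.Icc 1 n, 0 ≤ α k)
    (hαsum : ∑ k ∈ Finset.Icc 1 n, α k = 1) (hK₀ : 0 < ∑ k ∈ Finset.Icc 1 n, α k * δ ^ (k - 1))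
    (hK₁ : 0 < ∑ k ∈ Finset.Icc 1 n, α k * M ^ (k - 1))
    (hF : IsAdmissible a b ((∑ k ∈ Finset.Icc 1 n, α k * M ^ (k - 1)) * δ)
      ((∑ k ∈ Finset.Icc 1 n, α k * δ ^ (k - 1)) * M) F) :
    IsAdmissible a b δ M (solutionMap a b α n F f) := by
  have hsurj := hf.surjOn_iterPoly hab hαsum
  have hinj := hf.injOn_iterPoly hδ hM hα hK₀
  have hψ := (hf.slopeBoundsOn.iterPoly hf.mapsTo hδ hM hα).of_rightInvOn hK₀
    hsurj.mapsTo_invFunOn hsurj.rightInvOn_invFunOn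
  have hmem : ∀ x, solutionMap a b α n F f x ∈ Icc a b :=
    fun x => hsurj.mapsTo_invFunOn (hF.mem_Icc x)
  have hcont : Continuous (solutionMap a b α n F f) :=
    (hψ.lipschitzOnWith (inv_nonneg.2 hK₁.le)).continuousOn.comp_continuous hF.continuous hF.mem_Icc
  have hfixed : ∀ c ∈ Icc a b, f c = c → F c = c → solutionMap a b α n F f c = c :=
    fun c hc hfc hFc => by
      rw [solutionMap, comp_apply, hFc]
      conv_lhs => rw [← iterPoly_of_isFixedPt hαsum hfc]
      exact hinj.leftInvOn_invFunOn hc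
  have ha := hfixed a (left_mem_Icc.2 hab) hf.apply_left hF.apply_left
  have hb := hfixed b (right_mem_Icc.2 hab) hf.apply_right hF.apply_right
  have hslopes := hψ.comp hF.slopeBoundsOn hF.mapsTo (mul_nonneg hK₁.le hδ) (inv_nonneg.2 hK₁.le)
    (inv_nonneg.2 hK₀.le)
  rw [inv_mul_cancel_left₀ hK₁.ne', inv_mul_cancel_left₀ hK₀.ne'] at hslopes
  exact ⟨hcont, hcont.range_eq_Icc hab ha hb hmem, ha, hb, hslopes⟩

theorem IsAdmissible.mul_abs_solutionMap_sub_le (hf : IsAdmissible a b δ M f)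
    (hg : IsAdmissible a b δ M g) (hab : a ≤ b) (hδ : 0 ≤ δ) (hM : 0 ≤ M)
    (hα : ∀ k ∈ Finset.Icc 1 n, 0 ≤ α k) (hαsum : ∑ k ∈ Finset.Icc 1 n, α k = 1)
    (hK₀ : 0 < ∑ k ∈ Finset.Icc 1 n, α k * δ ^ (k - 1)) (hF : ∀ x, F x ∈ Icc a b) {ε : ℝ}
    (hfg : ∀ x ∈ Icc a b, |f x - g x| ≤ ε) (x : ℝ) :
    (∑ k ∈ Finset.Icc 1 n, α k * δ ^ (k - 1)) *
        |solutionMap a b α n F f x - solutionMap a b α n F g x|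
      ≤ (∑ k ∈ Finset.Icc 2 n, α k * ∑ j ∈ Finset.range (k - 1), M ^ j) * ε := by
  have hsf := hf.surjOn_iterPoly hab hαsum
  have hsg := hg.surjOn_iterPoly hab hαsum
  simp only [solutionMap, comp_apply]
  set u := invFunOn (iterPoly α n f) (Icc a b) (F x)
  set v := invFunOn (iterPoly α n g) (Icc a b) (F x)
  have hfu : iterPoly α n f u = F x := hsf.rightInvOn_invFunOn (hF x)
  have hgv : iterPoly α n g v = F x := hsg.rightInvOn_invFunOn (hF x)
  have hv : v ∈ Icc a b := hsg.mapsTo_invFunOn (hF x)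
  calc _ ≤ |iterPoly α n f u - iterPoly α n f v| :=
        ((hf.slopeBoundsOn.iterPoly hf.mapsTo hδ hM hα).mul_abs_sub_le_abs_sub hK₀.le
          (hsf.mapsTo_invFunOn (hF x)) hv).1
    _ = |iterPoly α n f v - iterPoly α n g v| := by rw [hfu, ← hgv, abs_sub_comm]
    _ ≤ _ := abs_iterPoly_sub_iterPoly_le hf.slopeBoundsOn hδ hM hf.mapsTo hg.mapsTo hα hfg hv

end SolutionMap

theorem stmt14_general (a b δ M : ℝ) (hab : a < b) (hδ0 : 0 < δ) (hδ1 : δ ≤ 1)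
    (hM : 1 ≤ M) (n : ℕ) (α : ℕ → ℝ)
    (hα1 : 0 < α 1)
    (hα : ∀ k ∈ Finset.Icc 2 n, 0 ≤ α k)
    (hαsum : ∑ k ∈ Finset.Icc 1 n, α k = 1)
    (hK : (∑ k ∈ Finset.Icc 2 n, α k * (∑ j ∈ Finset.range (k - 1), M ^ j))
        < ∑ k ∈ Finset.Icc 1 n, α k * δ ^ (k - 1))
    (F : ℝ → ℝ) (hFcont : Continuous F)
    (hFrange : Set.range F = Set.Icc a b)
    (hFa : F a = a) (hFb : F b = b)
    (hFlip : ∀ x ∈ Set.Icc a b, ∀ y ∈ Set.Icc a b, y ≤ x →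
      ((∑ k ∈ Finset.Icc 1 n, α k * M ^ (k - 1)) * δ) * (x - y) ≤ F x - F y ∧
      F x - F y ≤ ((∑ k ∈ Finset.Icc 1 n, α k * δ ^ (k - 1)) * M) * (x - y)) :
    ∃! f : ℝ → ℝ,
      (Continuous f ∧ Set.range f = Set.Icc a b ∧ f a = a ∧ f b = b ∧
        ∀ x ∈ Set.Icc a b, ∀ y ∈ Set.Icc a b, y ≤ x →
          δ * (x - y) ≤ f x - f y ∧ f x - f y ≤ M * (x - y)) ∧
      ∀ x : ℝ, ∑ k ∈ Finset.Icc 1 n, α k * f^[k] x = F x := by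
  have hM0 : 0 ≤ M := zero_le_one.trans hM
  have hα₀ : ∀ k ∈ Finset.Icc 1 n, 0 ≤ α k := fun k hk => by
    obtain ⟨hk1, hkn⟩ := Finset.mem_Icc.1 hk
    rcases hk1.eq_or_lt with rfl | hk2
    exacts [hα1.le, hα k (Finset.mem_Icc.2 ⟨hk2, hkn⟩)]
  set K₀ := ∑ k ∈ Finset.Icc 1 n, α k * δ ^ (k - 1)
  set K₁ := ∑ k ∈ Finset.Icc 1 n, α k * M ^ (k - 1)
  have hK₀ : 0 < K₀ := (Finset.sum_nonneg fun k hk =>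
    mul_nonneg (hα k hk) (Finset.sum_nonneg fun j _ => pow_nonneg hM0 j)).trans_lt hK
  have hK₁ : 1 ≤ K₁ := one_le_sum_mul_pow hα₀ hαsum hM
  have hF : IsAdmissible a b (K₁ * δ) (K₀ * M) F := ⟨hFcont, hFrange, hFa, hFb, hFlip⟩
  have hF' : IsAdmissible a b δ M F := { hF with
    slopeBoundsOn := hF.slopeBoundsOn.mono (le_mul_of_one_le_left hδ0.le hK₁)
      (mul_le_of_le_one_left hM0 (sum_mul_pow_le_one hα₀ hαsum hδ0.le hδ1)) }
  have hfix := BoundedContinuousFunction.existsUnique_fixedPoint (P := IsAdmissible a b δ M)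
    (T := solutionMap a b α n F) ((div_lt_one hK₀).2 hK)
    (fun f hf => hf.exists_boundedContinuousFunction) (isClosed_setOf_isAdmissible hab.le)
    (fun f hf => isAdmissible_solutionMap hf hab.le hδ0.le hM0 hα₀ hαsum hK₀
      (zero_lt_one.trans_le hK₁) hF)
    (fun g h hg hh x => by
      rw [Real.dist_eq, div_mul_eq_mul_div, le_div_iff₀ hK₀, mul_comm]
      exact hg.mul_abs_solutionMap_sub_le hh hab.le hδ0.le hM0 hα₀ hαsum hK₀ hF.mem_Icc
        (fun y _ => (Real.dist_eq _ _).symm.trans_le (g.dist_coe_le_dist y)) x)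
    ⟨F, hF'⟩
  exact (existsUnique_congr fun f => (and_congr_right fun hf =>
    hf.solutionMap_eq_self_iff hab.le hδ0.le hM0 hα₀ hαsum hK₀ hF.mem_Icc).trans
      (and_congr_left' isAdmissible_iff)).1 hfix

/-- Existence and uniqueness in `F_I(δ,M)` of solutions of the polynomial-like
iterative equation `∑ α_k fᵏ = F` on `ℝ`, when `K₂ < K₀`. -/
theorem stmt14 (a b δ M : ℝ) (hab : a < b) (hδ0 : 0 < δ) (hδ1 : δ ≤ 1)
    (hM : 1 ≤ M) (n : ℕ) (α : ℕ → ℝ)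
    (hα1 : 0 < α 1) (hα1' : α 1 < 1)
    (hα : ∀ k ∈ Finset.Icc 2 n, 0 ≤ α k)
    (hαsum : ∑ k ∈ Finset.Icc 1 n, α k = 1)
    (hK : (∑ k ∈ Finset.Icc 2 n, α k * (∑ j ∈ Finset.range (k - 1), M ^ j))
        < ∑ k ∈ Finset.Icc 1 n, α k * δ ^ (k - 1))
    (F : ℝ → ℝ) (hFcont : Continuous F)
    (hFrange : Set.range F = Set.Icc a b)
    (hFa : F a = a) (hFb : F b = b)
    (hFlip : ∀ x ∈ Set.Icc a b, ∀ y ∈ Set.Icc a b, y ≤ x →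
      ((∑ k ∈ Finset.Icc 1 n, α k * M ^ (k - 1)) * δ) * (x - y) ≤ F x - F y ∧
      F x - F y ≤ ((∑ k ∈ Finset.Icc 1 n, α k * δ ^ (k - 1)) * M) * (x - y)) :
    ∃! f : ℝ → ℝ,
      (Continuous f ∧ Set.range f = Set.Icc a b ∧ f a = a ∧ f b = b ∧
        ∀ x ∈ Set.Icc a b, ∀ y ∈ Set.Icc a b, y ≤ x →
          δ * (x - y) ≤ f x - f y ∧ f x - f y ≤ M * (x - y)) ∧
      ∀ x : ℝ, ∑ k ∈ Finset.Icc 1 n, α k * f^[k] x = F x :=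
  stmt14_general a b δ M hab hδ0 hδ1 hM n α hα1 hα hαsum hK F hFcont hFrange hFa hFb hFlip
end
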